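/- In the reduction from bin packing to weighted k-AV, the constructed history instance with k = B + 2 has a weighted-k-atomic valid total order if and only if the bin packing instance (n items with sizes s_i, m bins of capacity B) has a solution. -/

import Mathlib

/-!
In a valid order, put the long write `j` into bin `i` when `r(i)` is the first read placed after
it; there is one, since every long write ends before `r(m)` starts. A long write of bin `i` also
follows `w(i)`: for `i = 1` because it starts after `w(1)` ends, otherwise because it does not
precede `r(i-1)` while `w(i)` does. So bin `i` and `w(i+1)` all lie between `w(i)` and `r(i)`,
and the bound `B + 2` on the weight from `w(i)` up to `r(i)` leaves at most `B` for the bin.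

Conversely, a packing gives the order `w(1) B₁ w(2) r(1) B₂ w(3) r(2) … Bₘ w(m+1) r(m)`, where `Bᵢ`
lists the long writes of bin `i`. It respects real time because every long write is live from
just after `w(1)` ends until just before `r(m)` starts, and the only writes from `w(i)` up to
`r(i)` are `w(i)`, `Bᵢ` and `w(i+1)`.
-/

open scoped Classical

/-- An operation in a weighted history: start/finish times (rational), type,
value, and a weight (relevant for writes). -/
structure WOp where
  s : ℚ
  f : ℚ
  isRead : Bool
  val : ℕ
  wt : ℕ
deriving DecidableEq

/-- `a` occurs before `b` in the total order represented by the list `l`. -/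
def WBefore (l : List WOp) (a b : WOp) : Prop :=
  ∃ l1 l2 l3, l = l1 ++ a :: l2 ++ b :: l3

/-- A total order is valid if it respects real-time precedence. -/
def WValid (l : List WOp) : Prop :=
  ∀ a ∈ l, ∀ b ∈ l, a.f < b.s → WBefore l a b

/-- In the total order `l`, every read follows its dictating write, and the total
weight of the writes ordered at or after the dictating write and before the read
(including the dictating write itself) is at most `k`. -/
def WKAtomicOrder (k : ℕ) (l : List WOp) : Prop :=
  ∀ r ∈ l, r.isRead = true → ∀ w ∈ l, w.isRead = false → w.val = r.val →
    ∃ l1 l2 l3, l = l1 ++ w :: l2 ++ r :: l3 ∧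
      w.wt + ((l2.filter (fun op => op.isRead = false)).map WOp.wt).sum ≤ k

/-- A weighted history (given as a list of operations) is weighted-`k`-atomic if
some valid total order of its operations satisfies the weighted separation bound. -/
def WeightedKAtomic (k : ℕ) (H : List WOp) : Prop :=
  ∃ l : List WOp, l.Perm H ∧ WValid l ∧ WKAtomicOrder k l

/-- Well-formedness of a weighted history. -/
def WWf (H : List WOp) : Prop :=
  H.Nodup ∧
  (∀ op ∈ H, op.s < op.f) ∧
  (∀ op1 ∈ H, ∀ op2 ∈ H, op1 ≠ op2 → op1.s ≠ op2.s ∧ op1.f ≠ op2.f ∧ op1.s ≠ op2.f) ∧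
  (∀ w1 ∈ H, ∀ w2 ∈ H, w1.isRead = false → w2.isRead = false → w1.val = w2.val → w1 = w2) ∧
  (∀ w ∈ H, w.isRead = false → 0 < w.wt) ∧
  (∀ r ∈ H, r.isRead = true → ∃ w ∈ H, w.isRead = false ∧ w.val = r.val ∧ w.f < r.s)

/-- Bin packing: `n` items with sizes `sz` can be partitioned into `m` bins each
of total size at most `B`. -/
def BinPackingSolvable (n m B : ℕ) (sz : Fin n → ℕ) : Prop :=
  ∃ assign : Fin n → Fin m, ∀ b : Fin m,
    ∑ i ∈ Finset.univ.filter (fun i => assign i = b), sz i ≤ B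

/-- The `i`-th short write `w(i)` (weight 1). -/
def shortW (i : ℕ) : WOp := ⟨3 * i, 3 * i + 1, false, i, 1⟩

/-- The `i`-th read `r(i)`, a dictated read of `w(i)`, positioned after `w(i+1)`
and before `w(i+2)`. -/
def readOp (i : ℕ) : WOp := ⟨3 * i + 4 + 1/4, 3 * i + 5 + 1/2, true, i, 1⟩

/-- The `j`-th long write, with weight `sz j` and no dictated reads, forced after
`w(1)` and before `w(m+1)` but concurrent with everything in between. -/
def longW (n m : ℕ) (sz : Fin n → ℕ) (j : Fin n) : WOp :=
  ⟨4 + ((j : ℚ) + 1) / (2 * n + 5), 3 * m + 3 - ((j : ℚ) + 1) / (2 * n + 5),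
    false, m + 2 + j, sz j⟩

/-- The weighted history constructed from a bin-packing instance: short writes
`w(1), …, w(m+1)`, reads `r(1), …, r(m)`, and `n` long writes. -/
def reduction (n m : ℕ) (sz : Fin n → ℕ) : List WOp :=
  ((List.range' 1 (m + 1)).map shortW) ++ ((List.range' 1 m).map readOp) ++
    ((List.finRange n).map (longW n m sz))

namespace List

variable {α : Type*} {l l₁ l₂ l₃ : List α} {a b x : α}

theorem exists_eq_append_cons_append_cons_of_idxOf_lt [DecidableEq α] (hb : b ∈ l)
    (h : l.idxOf a < l.idxOf b) : ∃ l₁ l₂ l₃, l = l₁ ++ a :: l₂ ++ b :: l₃ := by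
  induction l with
  | nil => simp at hb
  | cons c t ih =>
    by_cases hca : c = a
    · subst hca
      have hbt : b ∈ t := (mem_cons.1 hb).resolve_left fun hbc => by simp [hbc] at h
      obtain ⟨t₁, t₂, rfl⟩ := append_of_mem hbt
      exact ⟨[], t₁, t₂, rfl⟩
    · have hcb : c ≠ b := by rintro rfl; simp at h
      rw [idxOf_cons_ne _ hca, idxOf_cons_ne _ hcb] at h
      obtain ⟨l₁, l₂, l₃, rfl⟩ := ih ((mem_cons.1 hb).resolve_left hcb.symm) (by omega)
      exact ⟨c :: l₁, l₂, l₃, rfl⟩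

theorem Nodup.idxOf_append_cons [DecidableEq α] (h : (l₁ ++ a :: l₂).Nodup) :
    (l₁ ++ a :: l₂).idxOf a = l₁.length := by
  have ha : a ∉ l₁ := fun ha => (nodup_middle.1 h).notMem (mem_append_left _ ha)
  rw [idxOf_append_of_notMem ha, idxOf_cons_self, Nat.add_zero]

theorem Nodup.idxOf_append_cons_append_cons [DecidableEq α] (h : (l₁ ++ a :: l₂ ++ b :: l₃).Nodup) :
    (l₁ ++ a :: l₂ ++ b :: l₃).idxOf a = l₁.length ∧
      (l₁ ++ a :: l₂ ++ b :: l₃).idxOf b = l₁.length + l₂.length + 1 := by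
  constructor
  · simpa using (show (l₁ ++ a :: (l₂ ++ b :: l₃)).Nodup by simpa using h).idxOf_append_cons
  · simpa [Nat.add_assoc] using h.idxOf_append_cons

theorem Nodup.mem_of_idxOf_lt_of_lt [DecidableEq α] (h : (l₁ ++ a :: l₂ ++ b :: l₃).Nodup)
    (hx : x ∈ l₁ ++ a :: l₂ ++ b :: l₃)
    (ha : (l₁ ++ a :: l₂ ++ b :: l₃).idxOf a < (l₁ ++ a :: l₂ ++ b :: l₃).idxOf x)
    (hb : (l₁ ++ a :: l₂ ++ b :: l₃).idxOf x < (l₁ ++ a :: l₂ ++ b :: l₃).idxOf b) :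
    x ∈ l₂ := by
  obtain ⟨hia, hib⟩ := h.idxOf_append_cons_append_cons
  rw [hia] at ha
  rw [hib] at hb
  obtain ⟨k, hk⟩ : ∃ k, (l₁ ++ a :: l₂ ++ b :: l₃).idxOf x = l₁.length + (k + 1) :=
    ⟨(l₁ ++ a :: l₂ ++ b :: l₃).idxOf x - l₁.length - 1, by omega⟩
  rw [← getElem_idxOf (idxOf_lt_length_iff.2 hx)]
  simp only [hk]
  rw [getElem_append_left (by simp; omega), getElem_append_right (by omega)]
  simp only [Nat.add_sub_cancel_left, getElem_cons_succ, getElem_mem]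

theorem flatMap_filter_perm {β : Type*} [DecidableEq β] {bs : List β} (f : α → β)
    (hl : l.Nodup) (hbs : bs.Nodup) (hf : ∀ a ∈ l, f a ∈ bs) :
    (bs.flatMap fun b => l.filter fun a => f a = b).Perm l := by
  refine (perm_ext_iff_of_nodup ?_ hl).2 fun a => ?_
  · refine nodup_flatMap.2 ⟨fun b _ => hl.filter _, hbs.imp fun hne => ?_⟩
    simp only [Function.onFun, List.disjoint_left, mem_filter]
    grind
  · simp only [mem_flatMap, mem_filter, decide_eq_true_eq]
    exact ⟨fun ⟨_, _, ha, _⟩ => ha, fun ha => ⟨f a, hf a ha, ha, rfl⟩⟩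

end List

section Orders

variable {l : List WOp} {a b : WOp}

lemma WValid.idxOf_lt (hv : WValid l) (hl : l.Nodup) (ha : a ∈ l) (hb : b ∈ l) (h : a.f < b.s) :
    l.idxOf a < l.idxOf b := by
  obtain ⟨l₁, l₂, l₃, rfl⟩ := hv a ha b hb h
  obtain ⟨hia, hib⟩ := hl.idxOf_append_cons_append_cons
  omega

lemma wValid_of_pairwise (hsf : ∀ x ∈ l, x.s ≤ x.f) (hl : l.Pairwise fun a b => a.s ≤ b.f) :
    WValid l := by
  intro a ha b hb hab
  rcases lt_trichotomy (l.idxOf a) (l.idxOf b) with h | h | h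
  · exact List.exists_eq_append_cons_append_cons_of_idxOf_lt hb h
  · obtain rfl := (List.idxOf_inj ha).1 h
    exact absurd (hsf a ha) (not_le.2 hab)
  · obtain ⟨l₁, l₂, l₃, rfl⟩ := List.exists_eq_append_cons_append_cons_of_idxOf_lt ha h
    exact absurd ((List.pairwise_append.1 hl).2.2 b (by simp) a (by simp)) (not_le.2 hab)

def writeWeight (l : List WOp) : ℕ :=
  ((l.filter fun op => op.isRead = false).map WOp.wt).sum

lemma writeWeight_append (l₁ l₂ : List WOp) :
    writeWeight (l₁ ++ l₂) = writeWeight l₁ + writeWeight l₂ := by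
  simp [writeWeight]

lemma sum_wt_le_writeWeight (hl : l.Nodup) {S : Finset WOp}
    (hS : ∀ x ∈ S, x ∈ l ∧ x.isRead = false) : ∑ x ∈ S, x.wt ≤ writeWeight l := by
  rw [writeWeight, ← List.sum_toFinset _ (hl.filter _)]
  exact Finset.sum_le_sum_of_subset fun x hx => by simpa using hS x hx

lemma WKAtomicOrder.wt_add_sum_le {k : ℕ} (h : WKAtomicOrder k l) (hl : l.Nodup) {w r : WOp}
    (hw : w ∈ l) (hwr : w.isRead = false) (hr : r ∈ l) (hrr : r.isRead = true)
    (hval : w.val = r.val) {S : Finset WOp}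
    (hS : ∀ x ∈ S, x ∈ l ∧ x.isRead = false ∧ l.idxOf w < l.idxOf x ∧ l.idxOf x < l.idxOf r) :
    w.wt + ∑ x ∈ S, x.wt ≤ k := by
  obtain ⟨l₁, l₂, l₃, rfl, hk⟩ := h r hr hrr w hw hwr hval
  have hl₂ : l₂.Nodup := hl.sublist <| by
    simpa using ((List.sublist_append_left l₂ (r :: l₃)).cons w).trans
      (List.sublist_append_right l₁ _)
  refine le_trans (Nat.add_le_add_left (sum_wt_le_writeWeight hl₂ fun x hx => ?_) _) hk
  obtain ⟨hxl, hxr, h₁, h₂⟩ := hS x hx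
  exact ⟨hl.mem_of_idxOf_lt_of_lt hxl h₁ h₂, hxr⟩

end Orders

section Reduction

variable {n m : ℕ} {sz : Fin n → ℕ}

lemma longW_offset_bounds (j : Fin n) :
    0 < ((j : ℚ) + 1) / (2 * n + 5) ∧ ((j : ℚ) + 1) / (2 * n + 5) < 1 := by
  have hj : (j : ℚ) < n := by exact_mod_cast j.isLt
  exact ⟨by positivity, by rw [div_lt_one (by positivity)]; linarith⟩

lemma longW_s_bounds (j : Fin n) : 4 < (longW n m sz j).s ∧ (longW n m sz j).s < 5 := by
  obtain ⟨h₀, h₁⟩ := longW_offset_bounds j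
  constructor <;> simp only [longW] <;> linarith

lemma longW_f_bounds (j : Fin n) :
    3 * (m : ℚ) + 2 < (longW n m sz j).f ∧ (longW n m sz j).f < 3 * m + 3 := by
  obtain ⟨h₀, h₁⟩ := longW_offset_bounds j
  constructor <;> simp only [longW] <;> linarith

lemma longW_injective : Function.Injective (longW n m sz) := fun a b h => by
  have := congrArg WOp.val h
  simp only [longW] at this
  exact Fin.ext (by omega)

lemma mem_reduction_iff {x : WOp} : x ∈ reduction n m sz ↔
    (∃ i, 1 ≤ i ∧ i ≤ m + 1 ∧ x = shortW i) ∨ (∃ i, 1 ≤ i ∧ i ≤ m ∧ x = readOp i) ∨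
      ∃ j, x = longW n m sz j := by
  simp only [reduction, List.mem_append, List.mem_map, List.mem_range'_1, List.mem_finRange,
    true_and, or_assoc]
  grind

lemma nodup_reduction : (reduction n m sz).Nodup := by
  have hshort : Function.Injective shortW := fun a b h => by simpa [shortW] using congrArg WOp.val h
  have hread : Function.Injective readOp := fun a b h => by simpa [readOp] using congrArg WOp.val h
  simp only [reduction, List.nodup_append]
  refine ⟨⟨(List.nodup_range' ..).map hshort, (List.nodup_range' ..).map hread, ?_⟩,
    (List.nodup_finRange n).map longW_injective, ?_⟩
  · simp only [List.mem_map]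
    rintro _ ⟨i, -, rfl⟩ _ ⟨i', -, rfl⟩ h
    simpa [shortW, readOp] using congrArg WOp.isRead h
  · simp only [List.mem_append, List.mem_map, List.mem_range'_1]
    rintro _ (⟨i, hi, rfl⟩ | ⟨i, -, rfl⟩) _ ⟨j, -, rfl⟩ h
    · have := congrArg WOp.val h
      simp only [shortW, longW] at this
      omega
    · simpa [readOp, longW] using congrArg WOp.isRead h

lemma s_le_f_of_mem_reduction (hm : 1 ≤ m) {x : WOp} (hx : x ∈ reduction n m sz) : x.s ≤ x.f := by
  have : (1 : ℚ) ≤ m := by exact_mod_cast hm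
  rcases mem_reduction_iff.1 hx with ⟨i, -, -, rfl⟩ | ⟨i, -, -, rfl⟩ | ⟨j, rfl⟩
  · simp only [shortW]; linarith
  · simp only [readOp]; linarith
  · linarith [(longW_s_bounds (m := m) (sz := sz) j).2, (longW_f_bounds (m := m) (sz := sz) j).1]

end Reduction

section Forward

variable {n m B : ℕ} {sz : Fin n → ℕ} {l : List WOp}

lemma shortW_mem_reduction {i : ℕ} (h₁ : 1 ≤ i) (h₂ : i ≤ m + 1) : shortW i ∈ reduction n m sz :=
  mem_reduction_iff.2 (Or.inl ⟨i, h₁, h₂, rfl⟩)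

lemma readOp_mem_reduction {i : ℕ} (h₁ : 1 ≤ i) (h₂ : i ≤ m) : readOp i ∈ reduction n m sz :=
  mem_reduction_iff.2 (Or.inr (Or.inl ⟨i, h₁, h₂, rfl⟩))

lemma longW_mem_reduction (j : Fin n) : longW n m sz j ∈ reduction n m sz :=
  mem_reduction_iff.2 (Or.inr (Or.inr ⟨j, rfl⟩))

lemma sum_sz_le_of_between (hl : l.Perm (reduction n m sz)) (hvalid : WValid l)
    (hatomic : WKAtomicOrder (B + 2) l) {i : ℕ} (hi : 1 ≤ i) (him : i ≤ m) {J : Finset (Fin n)}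
    (hJ : ∀ j ∈ J, l.idxOf (shortW i) < l.idxOf (longW n m sz j) ∧
      l.idxOf (longW n m sz j) < l.idxOf (readOp i)) :
    ∑ j ∈ J, sz j ≤ B := by
  have hnd : l.Nodup := hl.nodup_iff.2 nodup_reduction
  have hw : shortW i ∈ l := hl.mem_iff.2 (shortW_mem_reduction hi (by omega))
  have hw' : shortW (i + 1) ∈ l := hl.mem_iff.2 (shortW_mem_reduction (by omega) (by omega))
  have hr : readOp i ∈ l := hl.mem_iff.2 (readOp_mem_reduction hi him)
  have hw'_between : l.idxOf (shortW i) < l.idxOf (shortW (i + 1)) ∧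
      l.idxOf (shortW (i + 1)) < l.idxOf (readOp i) := by
    constructor <;> refine hvalid.idxOf_lt hnd ‹_› ‹_› ?_ <;> norm_num [shortW, readOp] <;> linarith
  have hw'_notMem : shortW (i + 1) ∉ J.image (longW n m sz) := by
    simp only [Finset.mem_image, not_exists, not_and]
    intro j _ h
    have := congrArg WOp.val h
    simp only [shortW, longW] at this
    omega
  have key := hatomic.wt_add_sum_le hnd hw rfl hr rfl rfl
    (S := insert (shortW (i + 1)) (J.image (longW n m sz))) <| by
    simp only [Finset.mem_insert, Finset.mem_image]
    rintro x (rfl | ⟨j, hj, rfl⟩)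
    · exact ⟨hw', rfl, hw'_between⟩
    · exact ⟨hl.mem_iff.2 (longW_mem_reduction j), rfl, hJ j hj⟩
  rw [Finset.sum_insert hw'_notMem, Finset.sum_image fun _ _ _ _ h => longW_injective h] at key
  simp only [shortW, longW] at key
  omega

theorem binPackingSolvable_of_weightedKAtomic (hm : 1 ≤ m)
    (h : WeightedKAtomic (B + 2) (reduction n m sz)) : BinPackingSolvable n m B sz := by
  obtain ⟨l, hl, hvalid, hatomic⟩ := h
  have hnd : l.Nodup := hl.nodup_iff.2 nodup_reduction
  have before : ∀ {a b : WOp}, a ∈ reduction n m sz → b ∈ reduction n m sz → a.f < b.s →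
      l.idxOf a < l.idxOf b :=
    fun ha hb => hvalid.idxOf_lt hnd (hl.mem_iff.2 ha) (hl.mem_iff.2 hb)
  have hlast : ∀ j, l.idxOf (longW n m sz j) < l.idxOf (readOp (m - 1 + 1)) := fun j => by
    rw [Nat.sub_add_cancel hm]
    refine before (longW_mem_reduction j) (readOp_mem_reduction hm le_rfl) ?_
    simp only [readOp]
    linarith [(longW_f_bounds (m := m) (sz := sz) j).2]
  -- the long write `j` goes into bin `Nat.find (hex j) + 1`, counting bins from 1
  have hex : ∀ j, ∃ i, l.idxOf (longW n m sz j) < l.idxOf (readOp (i + 1)) :=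
    fun j => ⟨_, hlast j⟩
  have hbin : ∀ j, Nat.find (hex j) < m := fun j => by
    have := Nat.find_min' (hex j) (hlast j)
    omega
  refine ⟨fun j => ⟨Nat.find (hex j), hbin j⟩, fun b => ?_⟩
  refine sum_sz_le_of_between hl hvalid hatomic (i := b + 1) (by omega) b.isLt fun j hj => ?_
  have hjb : Nat.find (hex j) = b := by simpa [Fin.ext_iff] using hj
  refine ⟨?_, hjb ▸ Nat.find_spec (hex j)⟩
  rcases Nat.eq_zero_or_pos (b : ℕ) with hb | hb
  · rw [hb]
    refine before (shortW_mem_reduction le_rfl (by omega)) (longW_mem_reduction j) ?_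
    norm_num [shortW]
    linarith [(longW_s_bounds (m := m) (sz := sz) j).1]
  · have hmin := Nat.find_min (hex j) (show (b : ℕ) - 1 < Nat.find (hex j) by omega)
    rw [Nat.sub_add_cancel hb] at hmin
    have : l.idxOf (shortW (b + 1)) < l.idxOf (readOp b) :=
      before (shortW_mem_reduction (by omega) (by omega)) (readOp_mem_reduction hb b.isLt.le)
        (by norm_num [shortW, readOp]; linarith)
    omega

end Forward

section Packing

variable {n m : ℕ} (sz : Fin n → ℕ) (assign : Fin n → Fin m)

def packingBin (i : ℕ) : List WOp :=
  ((List.finRange n).filter fun j => (assign j : ℕ) + 1 = i).map (longW n m sz)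

def packingBlock (i : ℕ) : List WOp :=
  packingBin sz assign i ++ [shortW (i + 1), readOp i]

def packingOrder : List WOp :=
  shortW 1 :: (List.range' 1 m).flatMap (packingBlock sz assign)

lemma packingOrder_perm : (packingOrder sz assign).Perm (reduction n m sz) := by
  have hbins : ((List.range' 1 m).flatMap (packingBin sz assign)).Perm
      ((List.finRange n).map (longW n m sz)) := by
    rw [show (List.range' 1 m).flatMap (packingBin sz assign) = ((List.range' 1 m).flatMap
      fun i => (List.finRange n).filter fun j => (assign j : ℕ) + 1 = i).map (longW n m sz) from
      List.map_flatMap.symm]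
    refine (List.flatMap_filter_perm _ (List.nodup_finRange n) List.nodup_range' ?_).map _
    intro j _
    simp only [List.mem_range'_1]
    omega
  have hshort : (List.range' 1 m).map (fun i => shortW (i + 1)) = (List.range' 2 m).map shortW := by
    rw [show (2 : ℕ) = 1 + 1 from rfl, ← List.map_add_range', List.map_map]
    simp [Function.comp_def, Nat.add_comm]
  have hrest : ((List.range' 1 m).flatMap fun i => [shortW (i + 1), readOp i]).Perm
      ((List.range' 2 m).map shortW ++ (List.range' 1 m).map readOp) := by
    rw [← hshort, List.map_eq_flatMap, List.map_eq_flatMap]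
    exact (List.flatMap_append_perm _ (fun i => [shortW (i + 1)]) fun i => [readOp i]).symm
  have hblocks := (List.flatMap_append_perm (List.range' 1 m) (packingBin sz assign)
    fun i => [shortW (i + 1), readOp i]).symm.trans (hbins.append hrest)
  refine (hblocks.trans List.perm_append_comm).cons (shortW 1) |>.trans ?_
  simp [reduction, List.range'_succ]

lemma mem_packingBin {i : ℕ} {x : WOp} (hx : x ∈ packingBin sz assign i) :
    ∃ j, x = longW n m sz j := by
  obtain ⟨j, -, rfl⟩ := List.mem_map.1 hx
  exact ⟨j, rfl⟩

variable {sz assign}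

lemma packingBlock_bounds {i : ℕ} (hi : 1 ≤ i) (him : i ≤ m) {x : WOp}
    (hx : x ∈ packingBlock sz assign i) : x.s ≤ 3 * i + 17 / 4 ∧ 3 * i + 2 ≤ x.f := by
  have hi' : (1 : ℚ) ≤ i := by exact_mod_cast hi
  have him' : (i : ℚ) ≤ m := by exact_mod_cast him
  simp only [packingBlock, List.mem_append, List.mem_cons, List.not_mem_nil, or_false] at hx
  rcases hx with hx | rfl | rfl
  · obtain ⟨j, rfl⟩ := mem_packingBin sz assign hx
    constructor <;> linarith [(longW_s_bounds (m := m) (sz := sz) j).2,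
      (longW_f_bounds (m := m) (sz := sz) j).1]
  · norm_num [shortW]; constructor <;> linarith
  · norm_num [readOp]; constructor <;> linarith

lemma packingBlock_pairwise (hm : 1 ≤ m) {i : ℕ} (hi : 1 ≤ i) :
    (packingBlock sz assign i).Pairwise fun a b => a.s ≤ b.f := by
  have hi' : (1 : ℚ) ≤ i := by exact_mod_cast hi
  have hm' : (1 : ℚ) ≤ m := by exact_mod_cast hm
  have hlong : ∀ x ∈ packingBin sz assign i, x.s < 5 ∧ 5 < x.f := fun x hx => by
    obtain ⟨j, rfl⟩ := mem_packingBin sz assign hx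
    exact ⟨(longW_s_bounds j).2, by linarith [(longW_f_bounds (m := m) (sz := sz) j).1]⟩
  simp only [packingBlock, List.pairwise_append, List.pairwise_cons, List.mem_cons,
    List.not_mem_nil, forall_eq_or_imp, List.Pairwise.nil, and_true]
  refine ⟨List.pairwise_of_forall_mem_list fun a ha b hb =>
    by linarith [(hlong a ha).1, (hlong b hb).2], ?_, fun a ha => ?_⟩
  · norm_num [shortW, readOp]; linarith
  · norm_num [shortW, readOp]; constructor <;> linarith [(hlong a ha).1]

lemma packingOrder_valid (hm : 1 ≤ m) : WValid (packingOrder sz assign) := by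
  refine wValid_of_pairwise (fun x hx =>
    s_le_f_of_mem_reduction hm ((packingOrder_perm sz assign).mem_iff.1 hx)) ?_
  simp only [packingOrder, List.pairwise_cons, List.mem_flatMap, List.mem_range'_1,
    List.pairwise_flatMap]
  refine ⟨?_, fun i hi => packingBlock_pairwise hm hi.1, ?_⟩
  · rintro x ⟨i, ⟨hi, him⟩, hx⟩
    have hi' : (1 : ℚ) ≤ i := by exact_mod_cast hi
    norm_num [shortW]
    linarith [(packingBlock_bounds hi (by omega) hx).2]
  · refine (List.pairwise_lt_range' (s := 1) (n := m)).imp_of_mem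
      fun {i i'} hi hi' hii' a ha b hb => ?_
    rw [List.mem_range'_1] at hi hi'
    have : (i : ℚ) + 1 ≤ i' := by exact_mod_cast hii'
    linarith [(packingBlock_bounds hi.1 (by omega) ha).1,
      (packingBlock_bounds hi'.1 (by omega) hb).2]

variable (sz assign)

lemma writeWeight_packingBin (b : Fin m) :
    writeWeight (packingBin sz assign (b + 1)) = ∑ j ∈ Finset.univ.filter (assign · = b), sz j := by
  rw [writeWeight, List.filter_eq_self.2 fun x hx => by
    obtain ⟨j, rfl⟩ := mem_packingBin sz assign hx; rfl]
  rw [packingBin, List.map_map, ← List.sum_toFinset _ ((List.nodup_finRange n).filter _)]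
  refine Finset.sum_congr ?_ fun _ _ => rfl
  ext j
  simp [Fin.ext_iff]

lemma exists_packingOrder_prefix (k : ℕ) : ∃ P Q,
    shortW 1 :: (List.range' 1 k).flatMap (packingBlock sz assign) = P ++ shortW (k + 1) :: Q ∧
      writeWeight Q = 0 := by
  cases k with
  | zero => exact ⟨[], [], rfl, rfl⟩
  | succ k =>
    refine ⟨shortW 1 :: (List.range' 1 k).flatMap (packingBlock sz assign) ++
      packingBin sz assign (k + 1), [readOp (k + 1)], ?_, rfl⟩
    simp [List.range'_concat, packingBlock, Nat.add_comm]

lemma exists_packingOrder_eq_append {i : ℕ} (hi : 1 ≤ i) (him : i ≤ m) : ∃ P Q S,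
    packingOrder sz assign =
      P ++ shortW i :: (Q ++ packingBin sz assign i ++ [shortW (i + 1)]) ++ readOp i :: S ∧
      writeWeight Q = 0 := by
  obtain ⟨P, Q, hPQ, hQ⟩ := exists_packingOrder_prefix sz assign (i - 1)
  have hrange : List.range' 1 m = List.range' 1 (i - 1) ++ i :: List.range' (i + 1) (m - i) := by
    have h := List.range'_append (s := 1) (m := i - 1) (n := m - i + 1) (step := 1)
    rw [show 1 + 1 * (i - 1) = i by omega, show i - 1 + (m - i + 1) = m by omega] at h
    rw [← h, List.range'_succ]
  refine ⟨P, Q, (List.range' (i + 1) (m - i)).flatMap (packingBlock sz assign), ?_, hQ⟩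
  rw [packingOrder, hrange, List.flatMap_append, ← List.cons_append, hPQ, Nat.sub_add_cancel hi]
  simp [packingBlock]

lemma packingOrder_wKAtomicOrder {B : ℕ}
    (hB : ∀ b : Fin m, ∑ j ∈ Finset.univ.filter (assign · = b), sz j ≤ B) :
    WKAtomicOrder (B + 2) (packingOrder sz assign) := by
  intro r hr hrr w hw hww hval
  have hperm := packingOrder_perm sz assign
  obtain ⟨b, rfl⟩ : ∃ b : Fin m, r = readOp (b + 1) := by
    rcases mem_reduction_iff.1 (hperm.mem_iff.1 hr) with ⟨i, -, -, rfl⟩ | ⟨i, hi, him, rfl⟩ |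
      ⟨j, rfl⟩
    · simp [shortW] at hrr
    · exact ⟨⟨i - 1, by omega⟩, by simp only; congr; omega⟩
    · simp [longW] at hrr
  obtain rfl : w = shortW (b + 1) := by
    rcases mem_reduction_iff.1 (hperm.mem_iff.1 hw) with ⟨i, -, -, rfl⟩ | ⟨i, -, -, rfl⟩ |
      ⟨j, rfl⟩
    · obtain rfl : i = b + 1 := by simpa [shortW, readOp] using hval
      rfl
    · simp [readOp] at hww
    · simp only [longW, readOp] at hval
      omega
  obtain ⟨P, Q, S, heq, hQ⟩ := exists_packingOrder_eq_append sz assign (by omega) b.isLt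
  refine ⟨P, _, S, heq, ?_⟩
  have hlast : writeWeight [shortW (b + 1 + 1)] = 1 := rfl
  change (shortW _).wt + writeWeight (Q ++ packingBin sz assign (b + 1) ++ [shortW (b + 1 + 1)])
    ≤ B + 2
  rw [writeWeight_append, writeWeight_append, hQ, writeWeight_packingBin, hlast]
  have := hB b
  simp only [shortW]
  omega

end Packing

theorem stmt_10_general (n m B : ℕ) (sz : Fin n → ℕ) (hm : 1 ≤ m) :
    WeightedKAtomic (B + 2) (reduction n m sz) ↔ BinPackingSolvable n m B sz :=
  ⟨binPackingSolvable_of_weightedKAtomic hm, fun ⟨assign, hB⟩ => ⟨packingOrder sz assign,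
    packingOrder_perm sz assign, packingOrder_valid hm, packingOrder_wKAtomicOrder sz assign hB⟩⟩

/-- The constructed history instance with `k = B + 2` has a weighted-`k`-atomic
valid total order iff the bin-packing instance has a solution. -/
theorem stmt_10 (n m B : ℕ) (sz : Fin n → ℕ) (hsz : ∀ i, 0 < sz i) (hm : 1 ≤ m) :
    WeightedKAtomic (B + 2) (reduction n m sz) ↔ BinPackingSolvable n m B sz :=
  stmt_10_general n m B sz hm
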